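/- Every extreme point (vertex) of the polytope D_k of k-limited traffic matrices is a k-sparse traffic matrix; i.e., vertices(D_k) ⊆ D'_k. -/

import Mathlib

/-- Node set of the `N × N` torus: `Z_N × Z_N` with coordinatewise addition mod `N`. -/
abbrev Vt (N : ℕ) := ZMod N × ZMod N

/-- The four link directions `{e1, e2, -e1, -e2}`. -/
def dirs (N : ℕ) : Finset (Vt N) :=
  {((1 : ZMod N), (0 : ZMod N)), (0, 1), (-1, 0), (0, -1)}

/-- Edge set of the directed torus graph: `(i, i+e)` for `i ∈ V`, `e ∈ A`. -/
def Edges (N : ℕ) : Set (Vt N × Vt N) := {p | ∃ e ∈ dirs N, p.2 = p.1 + e}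

/-- Index set of nonzero displacements `t ∈ V \ {0}`. -/
def tns (N : ℕ) [NeZero N] : Finset (Vt N) := Finset.univ.filter (· ≠ 0)

/-- Row (source) sum of a traffic matrix: `Σ_{t ≠ 0} d_{s,s+t}`. -/
def rowSum (N : ℕ) [NeZero N] (d : Vt N → Vt N → ℝ) (s : Vt N) : ℝ :=
  ∑ t ∈ tns N, d s t

/-- Column (sink) sum of a traffic matrix at node `s`: `Σ_{t ≠ 0} d_{s-t,s}`. -/
def colSum (N : ℕ) [NeZero N] (d : Vt N → Vt N → ℝ) (s : Vt N) : ℝ :=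
  ∑ t ∈ tns N, d (s - t) t

/-- Total traffic `Σ_{s,t} d_{s,s+t}`. -/
def totalSum (N : ℕ) [NeZero N] (d : Vt N → Vt N → ℝ) : ℝ :=
  ∑ s : Vt N, rowSum N d s

/-- `d` is a valid (hose-feasible) traffic matrix. -/
def IsTraffic (N : ℕ) [NeZero N] (d : Vt N → Vt N → ℝ) : Prop :=
  (∀ s t, 0 ≤ d s t) ∧ (∀ s, d s 0 = 0) ∧
  (∀ s, rowSum N d s ≤ 1) ∧ (∀ s, colSum N d s ≤ 1)

/-- `d` is `k`-limited: hose-feasible with total traffic at most `k`. -/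
def kLimited (N : ℕ) [NeZero N] (k : ℕ) (d : Vt N → Vt N → ℝ) : Prop :=
  IsTraffic N d ∧ totalSum N d ≤ (k : ℝ)

/-- `d` is `k`-sparse: hose-feasible with at most `k` sources and `k` sinks. -/
def kSparse (N : ℕ) [NeZero N] (k : ℕ) (d : Vt N → Vt N → ℝ) : Prop :=
  IsTraffic N d ∧
  {s : Vt N | ∃ t, t ≠ 0 ∧ d s t ≠ 0}.ncard ≤ k ∧
  {s : Vt N | ∃ t, t ≠ 0 ∧ d (s - t) t ≠ 0}.ncard ≤ k

/-- `f s t i e` is the fraction of traffic of pair `(s, s+t)` routed on link `(i, i+e)`.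
`f` is a valid routing policy: flow conservation and `0 ≤ f ≤ 1`. -/
def IsRouting (N : ℕ) [NeZero N] (f : Vt N → Vt N → Vt N → Vt N → ℝ) : Prop :=
  (∀ s t, t ≠ 0 → ∀ i : Vt N,
    (∑ e ∈ dirs N, f s t i e) - (∑ e ∈ dirs N, f s t (i + e) (-e)) =
      (if i = s then 1 else if i = s + t then -1 else 0)) ∧
  (∀ s t i e, 0 ≤ f s t i e ∧ f s t i e ≤ 1)

/-- Load on link `(i, i+e)` under routing `f` and traffic `d`. -/
def load (N : ℕ) [NeZero N] (f : Vt N → Vt N → Vt N → Vt N → ℝ)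
    (d : Vt N → Vt N → ℝ) (i e : Vt N) : ℝ :=
  ∑ s : Vt N, ∑ t ∈ tns N, d s t * f s t i e

/-- Maximum load on any link. -/
noncomputable def maxLoad (N : ℕ) [NeZero N] (f : Vt N → Vt N → Vt N → Vt N → ℝ)
    (d : Vt N → Vt N → ℝ) : ℝ :=
  sSup {x | ∃ i e, e ∈ dirs N ∧ x = load N f d i e}

/-- Optimal oblivious worst-case load over `k`-limited traffic. -/
noncomputable def thetaStar (N : ℕ) [NeZero N] (k : ℕ) : ℝ :=
  sInf {x | ∃ f, IsRouting N f ∧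
    x = sSup {y | ∃ d, kLimited N k d ∧ y = maxLoad N f d}}

/-!
Index `d` by source and sink, `M s c = d s (c - s)`. If `M` had more than `k` nonzero rows then,
since its total is at most `k`, two of them, `r₁ ≠ r₂`, would have row sums in `(0, 1)`. Call two
rows adjacent when they share a nonzero column. If two slack rows lie in one component, the
alternating `±1` pattern along a path between them is a direction `z`, supported on that of `M`,
that moves only these two row sums, in opposite ways, and no column sum. Otherwise all other rows
in the component of `rᵢ` are tight; the rows of the component and the columns they meet carry the
same total mass, which is an integer if all those columns are tight, so one of them, `cᵢ`, is slack,
and the difference of paths `r₁ ⇝ c₁` and `r₂ ⇝ c₂` is such a direction. Either way `M ± ε z` stays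
in `D_k` for small `ε > 0`, so `M` is not a vertex. Columns follow by transposition.
-/

open Finset Filter Topology Relation

theorem Real.eventually_add_mul_le {x y c : ℝ} (hx : x ≤ c) (hy : x = c → y = 0) :
    ∀ᶠ ε in 𝓝 (0 : ℝ), x + ε * y ≤ c := by
  rcases hx.eq_or_lt with rfl | hlt
  · simp [hy rfl]
  · have : Tendsto (fun ε : ℝ => x + ε * y) (𝓝 0) (𝓝 x) :=
      (by fun_prop : Continuous fun ε : ℝ => x + ε * y).tendsto' 0 x (by simp)
    exact (this.eventually (gt_mem_nhds hlt)).mono fun _ => le_of_lt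

theorem Finset.exists_ne_ne_one_of_sum_le_of_lt_card {ι : Type*} {s : Finset ι} {f : ι → ℝ}
    {k : ℕ} (hpos : ∀ i ∈ s, 0 < f i) (hsum : ∑ i ∈ s, f i ≤ k) (hcard : k < #s) :
    ∃ i ∈ s, ∃ j ∈ s, i ≠ j ∧ f i ≠ 1 ∧ f j ≠ 1 := by
  classical
  by_contra! h
  by_cases hone : ∃ i ∈ s, f i ≠ 1
  · obtain ⟨i, hi, hfi⟩ := hone
    have hrest : ∑ j ∈ s.erase i, f j = #(s.erase i) := by
      rw [sum_congr rfl fun j hj => h i hi j (mem_of_mem_erase hj) (ne_of_mem_erase hj).symm hfi]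
      simp
    have hk : (k : ℝ) ≤ #(s.erase i) := by
      rw [card_erase_of_mem hi]; exact_mod_cast Nat.le_sub_one_of_lt hcard
    rw [← add_sum_erase s f hi, hrest] at hsum
    linarith [hpos i hi]
  · push Not at hone
    rw [sum_congr rfl hone] at hsum
    simp only [sum_const, nsmul_eq_mul, mul_one] at hsum
    exact absurd hsum (not_le.2 (by exact_mod_cast hcard))

namespace Matrix

theorem sum_row_single_one {α β : Type*} [Fintype β] [DecidableEq α] [DecidableEq β]
    (a a' : α) (b : β) : ∑ b', single a b (1 : ℝ) a' b' = (Pi.single a 1 : α → ℝ) a' := by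
  by_cases h : a' = a <;> simp [single_apply, h, Ne.symm]

theorem sum_col_single_one {α β : Type*} [Fintype α] [DecidableEq α] [DecidableEq β]
    (a : α) (b b' : β) : ∑ a', single a b (1 : ℝ) a' b' = (Pi.single b 1 : β → ℝ) b' := by
  by_cases h : b' = b <;> simp [single_apply, h, Ne.symm]

def SharesColumn {α β : Type*} (M : Matrix α β ℝ) (a a' : α) : Prop :=
  ∃ b, M a b ≠ 0 ∧ M a' b ≠ 0

variable {α β : Type*} [Fintype α] [Fintype β]

section Paths

variable [DecidableEq α] [DecidableEq β] {M : Matrix α β ℝ}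

theorem exists_row_path_of_reflTransGen {a a' : α} (h : ReflTransGen M.SharesColumn a a') :
    ∃ z : Matrix α β ℝ, (∀ i j, M i j = 0 → z i j = 0) ∧
      (∀ i, ∑ j, z i j = (Pi.single a 1 : α → ℝ) i - (Pi.single a' 1 : α → ℝ) i) ∧
      ∀ j, ∑ i, z i j = 0 := by
  induction h with
  | refl => exact ⟨0, by simp, by simp, by simp⟩
  | @tail c c' _ hstep ih =>
    obtain ⟨z, hsupp, hrow, hcol⟩ := ih
    obtain ⟨b, hcb, hc'b⟩ := hstep
    refine ⟨z + single c b 1 - single c' b 1, fun i j hij => ?_, fun i => ?_, fun j => ?_⟩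
    · simp only [sub_apply, add_apply, single_apply, hsupp i j hij]
      split_ifs <;> simp_all
    · simp [sum_add_distrib, sum_sub_distrib, hrow, sum_row_single_one]
    · simp [sum_add_distrib, sum_sub_distrib, hcol, sum_col_single_one]

theorem exists_row_col_path_of_reflTransGen {a a' : α} {b : β}
    (h : ReflTransGen M.SharesColumn a a') (hb : M a' b ≠ 0) :
    ∃ z : Matrix α β ℝ, (∀ i j, M i j = 0 → z i j = 0) ∧
      (∀ i, ∑ j, z i j = (Pi.single a 1 : α → ℝ) i) ∧
      ∀ j, ∑ i, z i j = (Pi.single b 1 : β → ℝ) j := by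
  obtain ⟨z, hsupp, hrow, hcol⟩ := exists_row_path_of_reflTransGen h
  refine ⟨z + single a' b 1, fun i j hij => ?_, fun i => ?_, fun j => ?_⟩
  · simp only [add_apply, single_apply, hsupp i j hij]
    split_ifs <;> simp_all
  · simp [sum_add_distrib, hrow, sum_row_single_one]
  · simp [sum_add_distrib, hcol, sum_col_single_one]

end Paths

structure IsLimited (k : ℝ) (M : Matrix α β ℝ) : Prop where
  nonneg : ∀ a b, 0 ≤ M a b
  row_sum_le : ∀ a, ∑ b, M a b ≤ 1
  col_sum_le : ∀ b, ∑ a, M a b ≤ 1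
  total_le : ∑ a, ∑ b, M a b ≤ k

structure IsBalancedDirection (M z : Matrix α β ℝ) : Prop where
  support : ∀ a b, M a b = 0 → z a b = 0
  row_sum : ∀ a, ∑ b, M a b = 1 → ∑ b, z a b = 0
  col_sum : ∀ b, ∑ a, M a b = 1 → ∑ a, z a b = 0
  total : ∑ a, ∑ b, z a b = 0

/-- Being an extreme point of `{M | IsLimited k M}`, or of any of its faces cut out by coordinate
equations such as `M s s = 0`, implies this. -/
def IsSupportRigid (k : ℝ) (M : Matrix α β ℝ) : Prop :=
  ∀ z : Matrix α β ℝ, (∀ a b, M a b = 0 → z a b = 0) →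
    IsLimited k (M + z) → IsLimited k (M - z) → z = 0

variable {k : ℝ} {M z : Matrix α β ℝ}

theorem IsLimited.transpose (hM : IsLimited k M) : IsLimited k Mᵀ :=
  ⟨fun b a => hM.nonneg a b, hM.col_sum_le, hM.row_sum_le, sum_comm.trans_le hM.total_le⟩

theorem IsSupportRigid.transpose (hM : IsSupportRigid k M) : IsSupportRigid k Mᵀ := by
  intro z hz hadd hsub
  have := hM zᵀ (fun a b => hz b a)
    (by simpa using hadd.transpose) (by simpa using hsub.transpose)
  exact transpose_eq_zero.1 this

theorem IsLimited.eventually_add_smul (hM : IsLimited k M) (hz : IsBalancedDirection M z) :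
    ∀ᶠ ε in 𝓝 (0 : ℝ), IsLimited k (M + ε • z) := by
  have hnonneg : ∀ a b, ∀ᶠ ε in 𝓝 (0 : ℝ), -M a b + ε * -z a b ≤ 0 := fun a b =>
    Real.eventually_add_mul_le (by linarith [hM.nonneg a b])
      fun h => by simp [hz.support a b (neg_eq_zero.1 h)]
  have hrow : ∀ a, ∀ᶠ ε in 𝓝 (0 : ℝ), ∑ b, M a b + ε * ∑ b, z a b ≤ 1 := fun a =>
    Real.eventually_add_mul_le (hM.row_sum_le a) (hz.row_sum a)
  have hcol : ∀ b, ∀ᶠ ε in 𝓝 (0 : ℝ), ∑ a, M a b + ε * ∑ a, z a b ≤ 1 := fun b =>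
    Real.eventually_add_mul_le (hM.col_sum_le b) (hz.col_sum b)
  have htotal : ∀ᶠ ε in 𝓝 (0 : ℝ), ∑ a, ∑ b, M a b + ε * ∑ a, ∑ b, z a b ≤ k :=
    Real.eventually_add_mul_le hM.total_le fun _ => hz.total
  filter_upwards [eventually_all.2 fun a => eventually_all.2 (hnonneg a), eventually_all.2 hrow,
    eventually_all.2 hcol, htotal] with ε hnonneg hrow hcol htotal
  refine ⟨fun a b => ?_, fun a => ?_, fun b => ?_, ?_⟩
  · simp only [add_apply, smul_apply, smul_eq_mul]
    linarith [hnonneg a b]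
  · simpa [sum_add_distrib, mul_sum] using hrow a
  · simpa [sum_add_distrib, mul_sum] using hcol b
  · simpa [sum_add_distrib, mul_sum] using htotal

theorem IsLimited.exists_pos_add_sub_smul (hM : IsLimited k M) (hz : IsBalancedDirection M z) :
    ∃ ε : ℝ, 0 < ε ∧ IsLimited k (M + ε • z) ∧ IsLimited k (M - ε • z) := by
  obtain ⟨δ, hδ, hball⟩ := Metric.eventually_nhds_iff.1 (hM.eventually_add_smul hz)
  refine ⟨δ / 2, half_pos hδ, hball ?_, ?_⟩
  · simpa [abs_of_pos hδ] using half_lt_self hδ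
  · simpa [sub_eq_add_neg, neg_smul] using
      hball (y := -(δ / 2)) (by simpa [abs_of_pos hδ] using half_lt_self hδ)

theorem IsSupportRigid.eq_zero_of_isBalancedDirection (hrigid : IsSupportRigid k M)
    (hM : IsLimited k M) (hz : IsBalancedDirection M z) : z = 0 := by
  obtain ⟨ε, hε, hadd, hsub⟩ := hM.exists_pos_add_sub_smul hz
  have := hrigid (ε • z) (fun a b h => by simp [hz.support a b h]) hadd hsub
  exact (smul_eq_zero.1 this).resolve_left hε.ne'

theorem exists_col_sum_ne_one_of_reflTransGen {r : α} (hr₀ : 0 < ∑ b, M r b)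
    (hr₁ : ∑ b, M r b < 1)
    (htight : ∀ a, ReflTransGen M.SharesColumn r a → a ≠ r → ∑ b, M a b = 1) :
    ∃ a b, ReflTransGen M.SharesColumn r a ∧ M a b ≠ 0 ∧ ∑ i, M i b ≠ 1 := by
  classical
  by_contra! hcol
  set X : Finset α := {a | ReflTransGen M.SharesColumn r a}
  set C : Finset β := {b | ∃ a ∈ X, M a b ≠ 0}
  have hrX : r ∈ X := (mem_filter_univ r).2 .refl
  -- rows of `X` meet only columns of `C`, and columns of `C` meet only rows of `X`
  have hexchange : ∑ a ∈ X, ∑ b, M a b = ∑ b ∈ C, ∑ a, M a b := by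
    calc ∑ a ∈ X, ∑ b, M a b = ∑ a ∈ X, ∑ b ∈ C, M a b := by
          refine sum_congr rfl fun a ha => (sum_subset (subset_univ C) fun b _ hb => ?_).symm
          by_contra h
          exact hb (by simpa [C] using ⟨a, ha, h⟩)
      _ = ∑ b ∈ C, ∑ a ∈ X, M a b := sum_comm
      _ = ∑ b ∈ C, ∑ a, M a b := by
          refine sum_congr rfl fun b hb => sum_subset (subset_univ X) fun a _ ha => ?_
          obtain ⟨a', ha', hb'⟩ : ∃ a' ∈ X, M a' b ≠ 0 := by simpa [C] using hb
          by_contra h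
          exact ha (by simp only [X, mem_filter_univ] at ha' ⊢; exact ha'.tail ⟨b, hb', h⟩)
  have hrows : ∑ a ∈ X, ∑ b, M a b = ∑ b, M r b + #(X.erase r) := by
    rw [← add_sum_erase X _ hrX, sum_congr rfl fun a ha =>
      htight a (by simpa [X] using mem_of_mem_erase ha) (ne_of_mem_erase ha)]
    simp
  have hCtight : ∀ b ∈ C, ∑ a, M a b = 1 := fun b hb => by
    obtain ⟨a, ha, hab⟩ : ∃ a ∈ X, M a b ≠ 0 := by simpa [C] using hb
    exact hcol a b (by simpa [X] using ha) hab
  rw [hrows, sum_congr rfl hCtight] at hexchange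
  simp only [sum_const, nsmul_eq_mul, mul_one] at hexchange
  have hlt : #(X.erase r) < #C := by exact_mod_cast (by linarith : (#(X.erase r) : ℝ) < #C)
  have hgt : #C < #(X.erase r) + 1 := by
    exact_mod_cast (by linarith : (#C : ℝ) < #(X.erase r) + 1)
  omega

theorem isBalancedDirection_of_sum_eq [DecidableEq α] {r₁ r₂ : α}
    (hsupp : ∀ a b, M a b = 0 → z a b = 0)
    (hrow : ∀ a, ∑ b, z a b = (Pi.single r₁ 1 : α → ℝ) a - (Pi.single r₂ 1 : α → ℝ) a)
    (hr₁ : ∑ b, M r₁ b ≠ 1) (hr₂ : ∑ b, M r₂ b ≠ 1)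
    (hcol : ∀ b, ∑ a, M a b = 1 → ∑ a, z a b = 0) : IsBalancedDirection M z where
  support := hsupp
  row_sum a ha := by
    rw [hrow, Pi.single_eq_of_ne (by rintro rfl; exact hr₁ ha),
      Pi.single_eq_of_ne (by rintro rfl; exact hr₂ ha), sub_zero]
  col_sum := hcol
  total := by simp [hrow, sum_sub_distrib]

theorem exists_isBalancedDirection_of_ne {r₁ r₂ : α} (hne : r₁ ≠ r₂)
    (h₁ : 0 < ∑ b, M r₁ b) (h₁' : ∑ b, M r₁ b < 1)
    (h₂ : 0 < ∑ b, M r₂ b) (h₂' : ∑ b, M r₂ b < 1) :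
    ∃ z ≠ 0, IsBalancedDirection M z := by
  classical
  have hne_zero : ∀ {z : Matrix α β ℝ} {a a' : α}, a ≠ a' →
      (∀ i, ∑ j, z i j = (Pi.single a 1 : α → ℝ) i - (Pi.single a' 1 : α → ℝ) i) → z ≠ 0 := by
    rintro z a a' haa' hz rfl
    simpa [haa'] using hz a
  by_cases hlinked : ∃ a a', a ≠ a' ∧ ∑ b, M a b ≠ 1 ∧ ∑ b, M a' b ≠ 1 ∧
      ReflTransGen M.SharesColumn a a'
  · obtain ⟨a, a', haa', ha, ha', hpath⟩ := hlinked
    obtain ⟨z, hsupp, hrow, hcol⟩ := exists_row_path_of_reflTransGen hpath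
    exact ⟨z, hne_zero haa' hrow,
      isBalancedDirection_of_sum_eq hsupp hrow ha ha' fun b _ => hcol b⟩
  push Not at hlinked
  have hto_slack_col : ∀ r, 0 < ∑ b, M r b → ∑ b, M r b < 1 → ∃ z : Matrix α β ℝ, ∃ c,
      (∀ i j, M i j = 0 → z i j = 0) ∧ (∀ i, ∑ j, z i j = (Pi.single r 1 : α → ℝ) i) ∧
      (∀ j, ∑ i, z i j = (Pi.single c 1 : β → ℝ) j) ∧ ∑ i, M i c ≠ 1 := by
    intro r hr hr'
    obtain ⟨a, c, hpath, hac, hc⟩ := exists_col_sum_ne_one_of_reflTransGen hr hr'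
      fun a hpath har => by_contra fun ha => hlinked r a (Ne.symm har) hr'.ne ha hpath
    obtain ⟨z, hsupp, hrow, hcol⟩ := exists_row_col_path_of_reflTransGen hpath hac
    exact ⟨z, c, hsupp, hrow, hcol, hc⟩
  obtain ⟨z₁, c₁, hsupp₁, hrow₁, hcol₁, hc₁⟩ := hto_slack_col r₁ h₁ h₁'
  obtain ⟨z₂, c₂, hsupp₂, hrow₂, hcol₂, hc₂⟩ := hto_slack_col r₂ h₂ h₂'
  have hrow : ∀ i, ∑ j, (z₁ - z₂) i j = (Pi.single r₁ 1 : α → ℝ) i - (Pi.single r₂ 1 : α → ℝ) i :=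
    fun i => by simp [sum_sub_distrib, hrow₁, hrow₂]
  refine ⟨z₁ - z₂, hne_zero hne hrow, isBalancedDirection_of_sum_eq
    (fun i j h => by simp [hsupp₁ i j h, hsupp₂ i j h]) hrow h₁'.ne h₂'.ne fun b hb => ?_⟩
  simp only [sub_apply, sum_sub_distrib, hcol₁, hcol₂]
  rw [Pi.single_eq_of_ne (by rintro rfl; exact hc₁ hb),
    Pi.single_eq_of_ne (by rintro rfl; exact hc₂ hb), sub_zero]

theorem IsLimited.ncard_nonzero_rows_le {k : ℕ} (hM : IsLimited k M)
    (hrigid : IsSupportRigid k M) : {a | ∃ b, M a b ≠ 0}.ncard ≤ k := by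
  classical
  by_contra! hk
  rw [Set.ncard_eq_toFinset_card', Set.toFinset_ofPred] at hk
  have hpos : ∀ a ∈ ({a | ∃ b, M a b ≠ 0} : Finset α), 0 < ∑ b, M a b := fun a ha => by
    obtain ⟨b, hb⟩ := (mem_filter_univ a).1 ha
    exact sum_pos' (fun b _ => hM.nonneg a b) ⟨b, mem_univ b, (hM.nonneg a b).lt_of_ne' hb⟩
  have hsum : ∑ a ∈ ({a | ∃ b, M a b ≠ 0} : Finset α), ∑ b, M a b ≤ k :=
    (sum_le_univ_sum_of_nonneg fun a => sum_nonneg fun b _ => hM.nonneg a b).trans hM.total_le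
  obtain ⟨r₁, hr₁, r₂, hr₂, hne, h₁, h₂⟩ := exists_ne_ne_one_of_sum_le_of_lt_card hpos hsum hk
  obtain ⟨z, hz, hdir⟩ := exists_isBalancedDirection_of_ne hne
    (hpos r₁ hr₁) ((hM.row_sum_le r₁).lt_of_ne h₁) (hpos r₂ hr₂) ((hM.row_sum_le r₂).lt_of_ne h₂)
  exact hz (hrigid.eq_zero_of_isBalancedDirection hM hdir)

theorem IsLimited.ncard_nonzero_cols_le {k : ℕ} (hM : IsLimited k M)
    (hrigid : IsSupportRigid k M) : {b | ∃ a, M a b ≠ 0}.ncard ≤ k :=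
  hM.transpose.ncard_nonzero_rows_le hrigid.transpose

end Matrix

section Torus

variable {N : ℕ}

def toMatrix (d : Vt N → Vt N → ℝ) : Matrix (Vt N) (Vt N) ℝ := fun s c => d s (c - s)

def ofMatrix (M : Matrix (Vt N) (Vt N) ℝ) : Vt N → Vt N → ℝ := fun s t => M s (s + t)

theorem toMatrix_ofMatrix (M : Matrix (Vt N) (Vt N) ℝ) : toMatrix (ofMatrix M) = M := by
  ext s c
  simp [toMatrix, ofMatrix]

theorem sources_eq_nonzero_rows_toMatrix {d : Vt N → Vt N → ℝ} (hd : ∀ s, d s 0 = 0) :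
    {s : Vt N | ∃ t, t ≠ 0 ∧ d s t ≠ 0} = {s | ∃ c, toMatrix d s c ≠ 0} := by
  ext s
  refine ⟨fun ⟨t, _, ht⟩ => ⟨s + t, by simpa [toMatrix] using ht⟩, fun ⟨c, hc⟩ => ⟨c - s, ?_, hc⟩⟩
  rintro h
  exact hc (by simp [toMatrix, h, hd])

theorem sinks_eq_nonzero_cols_toMatrix {d : Vt N → Vt N → ℝ} (hd : ∀ s, d s 0 = 0) :
    {c : Vt N | ∃ t, t ≠ 0 ∧ d (c - t) t ≠ 0} = {c | ∃ s, toMatrix d s c ≠ 0} := by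
  ext c
  refine ⟨fun ⟨t, _, ht⟩ => ⟨c - t, by simpa [toMatrix] using ht⟩,
    fun ⟨s, hs⟩ => ⟨c - s, ?_, by simpa [toMatrix] using hs⟩⟩
  rintro h
  exact hs (by simp [toMatrix, h, hd])

variable [NeZero N]

theorem sum_tns_eq_sum {f : Vt N → ℝ} (hf : f 0 = 0) : ∑ t ∈ tns N, f t = ∑ t, f t :=
  sum_filter_of_ne fun _ _ ht h => ht (h ▸ hf)

theorem rowSum_eq_sum_toMatrix {d : Vt N → Vt N → ℝ} {s : Vt N} (hd : d s 0 = 0) :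
    rowSum N d s = ∑ c, toMatrix d s c := by
  rw [rowSum, sum_tns_eq_sum hd]
  exact ((Equiv.subRight s).sum_comp (d s)).symm

theorem colSum_eq_sum_toMatrix {d : Vt N → Vt N → ℝ} (hd : ∀ s, d s 0 = 0) (c : Vt N) :
    colSum N d c = ∑ s, toMatrix d s c := by
  rw [colSum, sum_tns_eq_sum (by simpa using hd c)]
  refine (Fintype.sum_equiv (Equiv.subLeft c) _ _ fun s => ?_).symm
  simp [toMatrix]

theorem kLimited_iff {k : ℕ} {d : Vt N → Vt N → ℝ} :
    kLimited N k d ↔ (∀ s, d s 0 = 0) ∧ Matrix.IsLimited k (toMatrix d) := by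
  constructor
  · rintro ⟨⟨hnonneg, hd, hrow, hcol⟩, htotal⟩
    refine ⟨hd, fun s c => hnonneg _ _, fun s => ?_, fun c => ?_, ?_⟩
    · rw [← rowSum_eq_sum_toMatrix (hd s)]; exact hrow s
    · rw [← colSum_eq_sum_toMatrix hd]; exact hcol c
    · simpa [totalSum, rowSum_eq_sum_toMatrix (hd _)] using htotal
  · rintro ⟨hd, hM⟩
    refine ⟨⟨fun s t => by simpa [toMatrix] using hM.nonneg s (s + t), hd, fun s => ?_,
      fun c => ?_⟩, ?_⟩
    · rw [rowSum_eq_sum_toMatrix (hd s)]; exact hM.row_sum_le s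
    · rw [colSum_eq_sum_toMatrix hd]; exact hM.col_sum_le c
    · simpa [totalSum, rowSum_eq_sum_toMatrix (hd _)] using hM.total_le

theorem kLimited_ofMatrix {k : ℕ} {M : Matrix (Vt N) (Vt N) ℝ} (hdiag : ∀ s, M s s = 0)
    (hM : Matrix.IsLimited k M) : kLimited N k (ofMatrix M) :=
  kLimited_iff.2 ⟨fun s => by simpa [ofMatrix] using hdiag s, by rwa [toMatrix_ofMatrix]⟩

theorem isSupportRigid_toMatrix {k : ℕ} {d : Vt N → Vt N → ℝ} (hd : ∀ s, d s 0 = 0)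
    (hvert : ∀ d₁ d₂ : Vt N → Vt N → ℝ, ∀ l : ℝ,
      kLimited N k d₁ → kLimited N k d₂ → 0 < l → l < 1 →
      (∀ s t, d s t = l * d₁ s t + (1 - l) * d₂ s t) → d₁ = d₂) :
    Matrix.IsSupportRigid k (toMatrix d) := by
  intro z hz hadd hsub
  have hdiag : ∀ s, toMatrix d s s = 0 := by simp [toMatrix, hd]
  have heq := hvert _ _ (1 / 2)
    (kLimited_ofMatrix (fun s => by simp [hdiag, hz s s (hdiag s)]) hadd)
    (kLimited_ofMatrix (fun s => by simp [hdiag, hz s s (hdiag s)]) hsub)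
    (by norm_num) (by norm_num) fun s t => by simp [ofMatrix, toMatrix]; ring
  ext s c
  have := congrFun (congrFun heq s) (c - s)
  simp only [ofMatrix, Matrix.add_apply, Matrix.sub_apply, add_sub_cancel] at this
  simp only [Matrix.zero_apply]
  linarith

end Torus

/-- Every vertex (extreme point) of the polytope `D_k` of `k`-limited traffic
matrices is a `k`-sparse traffic matrix. -/
theorem stmt6 (N : ℕ) [NeZero N] (k : ℕ) (d : Vt N → Vt N → ℝ)
    (hd : kLimited N k d)
    (hvert : ∀ d₁ d₂ : Vt N → Vt N → ℝ, ∀ l : ℝ,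
      kLimited N k d₁ → kLimited N k d₂ → 0 < l → l < 1 →
      (∀ s t, d s t = l * d₁ s t + (1 - l) * d₂ s t) → d₁ = d₂) :
    kSparse N k d := by
  obtain ⟨hd0, hM⟩ := kLimited_iff.1 hd
  have hrigid := isSupportRigid_toMatrix hd0 hvert
  refine ⟨hd.1, ?_, ?_⟩
  · rw [sources_eq_nonzero_rows_toMatrix hd0]
    exact hM.ncard_nonzero_rows_le hrigid
  · rw [sinks_eq_nonzero_cols_toMatrix hd0]
    exact hM.ncard_nonzero_cols_le hrigid
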